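/- arXiv:1305.4501 — 3 statements merged into one kernel-verified Lean document; each statement's English description precedes it below -/
import Mathlib

section
/- If a, b, c ∈ k and a', b', c' ∈ k satisfy s2(a,b,c) = s2(a',b',c'), s3(a,b,c) = s3(a',b',c'), and s4(a,b,c) = s4(a',b',c'), with a, c, a', c' all nonzero and a^2 + c^2 ≠ 0, then (a',b',c') lies in the orbit of (a,b,c) under the dihedral group generated by τ1 and τ2. -/
/-!
Write `ε = ζ²`, so `ε² = -1` and `τ1 (a, b, c) = (-ε a, -b, ε c)`. From `s2` and `s4`,
`(a'² + c'²)² = (a² + c²)²`, so `a'² + c'² = ±(a² + c²)`. In the `-` case replace `(a, b, c)`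
by its `τ1`-image, which has the same `s2`, opposite `a² + c²` and opposite `b`. In the `+`
case `b' = b` (as `a² + c² ≠ 0`), and `a'²`, `c'²` are the roots of `X² - (a² + c²) X + (ac)²`,
i.e. `a'² ∈ {a², c²}`; with `a' c' = a c` this leaves exactly the four images of `(a, b, c)`
under the subgroup generated by `τ1²` and `τ2`.
-/

open Equiv

section Invariants

variable {R : Type*} [CommRing R] [IsDomain R]

theorem sq_add_sq_eq_or_eq_neg_of_mul_eq_of_pow_four_add_eq {a c a' c' : R}
    (hs2 : a * c = a' * c') (hs4 : a ^ 4 + c ^ 4 = a' ^ 4 + c' ^ 4) :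
    a' ^ 2 + c' ^ 2 = a ^ 2 + c ^ 2 ∨ a' ^ 2 + c' ^ 2 = -(a ^ 2 + c ^ 2) :=
  sq_eq_sq_iff_eq_or_eq_neg.mp <| by
    linear_combination (-1 : R) * hs4 - 2 * (a * c + a' * c') * hs2

theorem eq_or_eq_neg_or_swap_of_mul_eq_of_sq_add_sq_eq {a c a' c' : R} (ha' : a' ≠ 0)
    (hs2 : a * c = a' * c') (hsq : a ^ 2 + c ^ 2 = a' ^ 2 + c' ^ 2) :
    (a' = a ∧ c' = c) ∨ (a' = -a ∧ c' = -c) ∨ (a' = c ∧ c' = a) ∨ (a' = -c ∧ c' = -a) := by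
  have hc' : ∀ x y : R, a' = x → x * y = a * c → c' = y := fun x y hx hxy =>
    mul_left_cancel₀ ha' (by rw [← hs2, ← hxy, hx])
  -- `a'²` is a root of `X² - (a² + c²) X + (ac)² = (X - a²)(X - c²)`
  have hroot : (a' ^ 2 - a ^ 2) * (a' ^ 2 - c ^ 2) = 0 := by
    linear_combination (-a' ^ 2) * hsq + (a * c + a' * c') * hs2
  rcases mul_eq_zero.mp hroot with h | h <;>
    rcases sq_eq_sq_iff_eq_or_eq_neg.mp (sub_eq_zero.mp h) with rfl | rfl
  · exact .inl ⟨rfl, hc' _ _ rfl rfl⟩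
  · exact .inr <| .inl ⟨rfl, hc' _ _ rfl (by ring)⟩
  · exact .inr <| .inr <| .inl ⟨rfl, hc' _ _ rfl (by ring)⟩
  · exact .inr <| .inr <| .inr ⟨rfl, hc' _ _ rfl (by ring)⟩

end Invariants

def negOuter (R : Type*) [InvolutiveNeg R] : Perm (R × R × R) :=
  (Equiv.neg R).prodCongr ((Equiv.refl R).prodCongr (Equiv.neg R))

def swapOuter (α : Type*) : Perm (α × α × α) :=
  Function.Involutive.toPerm (fun p => (p.2.2, p.2.1, p.1)) fun _ => rfl

@[simp]
theorem negOuter_apply {R : Type*} [InvolutiveNeg R] (p : R × R × R) :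
    negOuter R p = (-p.1, p.2.1, -p.2.2) := rfl

theorem exists_mem_apply_eq_of_mul_eq_of_sq_add_sq_eq {R : Type*} [CommRing R] [IsDomain R]
    {G : Subgroup (Perm (R × R × R))} (hneg : negOuter R ∈ G) (hswap : swapOuter R ∈ G)
    {a b c a' c' : R} (ha' : a' ≠ 0) (hs2 : a * c = a' * c')
    (hsq : a ^ 2 + c ^ 2 = a' ^ 2 + c' ^ 2) :
    ∃ g ∈ G, g (a, b, c) = (a', b, c') := by
  rcases eq_or_eq_neg_or_swap_of_mul_eq_of_sq_add_sq_eq ha' hs2 hsq with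
    ⟨rfl, rfl⟩ | ⟨rfl, rfl⟩ | ⟨rfl, rfl⟩ | ⟨rfl, rfl⟩
  · exact ⟨1, G.one_mem, rfl⟩
  · exact ⟨negOuter R, hneg, rfl⟩
  · exact ⟨swapOuter R, hswap, rfl⟩
  · exact ⟨negOuter R * swapOuter R, G.mul_mem hneg hswap, rfl⟩

theorem same_invariants_implies_conjugate_general (k : Type*) [Field k]
    (ζ : k) (hζ : IsPrimitiveRoot ζ 8)
    (τ1 τ2 : Equiv.Perm (k × k × k))
    (h1 : ∀ p : k × k × k, τ1 p = (ζ ^ 6 * p.1, ζ ^ 4 * p.2.1, ζ ^ 2 * p.2.2))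
    (h2 : ∀ p : k × k × k, τ2 p = (p.2.2, p.2.1, p.1))
    (a b c a' b' c' : k)
    (ha' : a' ≠ 0)
    (hac : a ^ 2 + c ^ 2 ≠ 0)
    (hs2 : a * c = a' * c')
    (hs3 : (a ^ 2 + c ^ 2) * b = (a' ^ 2 + c' ^ 2) * b')
    (hs4 : a ^ 4 + c ^ 4 = a' ^ 4 + c' ^ 4) :
    ∃ g ∈ (Subgroup.closure {τ1, τ2} : Subgroup (Equiv.Perm (k × k × k))),
      g (a, b, c) = (a', b', c') := by
  set G : Subgroup (Perm (k × k × k)) := Subgroup.closure {τ1, τ2}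
  have hτ1 : τ1 ∈ G := Subgroup.subset_closure (by simp)
  have hζ4 : ζ ^ 4 = -1 :=
    (hζ.pow_of_dvd (by norm_num) (by norm_num : 4 ∣ 8)).eq_neg_one_of_two_right
  have hneg : negOuter k ∈ G := by
    convert G.mul_mem hτ1 hτ1 using 1
    ext ⟨x, y, z⟩ <;> simp only [negOuter_apply, Perm.mul_apply, h1]
    · linear_combination (-x * (ζ ^ 8 - ζ ^ 4 + 1)) * hζ4
    · linear_combination (-y * (ζ ^ 4 - 1)) * hζ4
    · linear_combination (-z) * hζ4
  have hswap : swapOuter k ∈ G := by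
    rw [show swapOuter k = τ2 from (Equiv.ext h2).symm]
    exact Subgroup.subset_closure (by simp)
  rcases sq_add_sq_eq_or_eq_neg_of_mul_eq_of_pow_four_add_eq hs2 hs4 with hsq | hsq
  · obtain rfl : b = b' := mul_left_cancel₀ hac (by rw [hs3, hsq])
    exact exists_mem_apply_eq_of_mul_eq_of_sq_add_sq_eq hneg hswap ha' hs2 hsq.symm
  · obtain rfl : ζ ^ 4 * b = b' := mul_left_cancel₀ hac <| by
      linear_combination (a ^ 2 + c ^ 2) * b * hζ4 - hs3 - b' * hsq
    obtain ⟨g, hg, hgτ⟩ := exists_mem_apply_eq_of_mul_eq_of_sq_add_sq_eq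
      (a := ζ ^ 6 * a) (b := ζ ^ 4 * b) (c := ζ ^ 2 * c) (c' := c') hneg hswap ha'
      (by linear_combination a * c * (ζ ^ 4 - 1) * hζ4 + hs2)
      (by linear_combination (a ^ 2 * (ζ ^ 8 - ζ ^ 4 + 1) + c ^ 2) * hζ4 - hsq)
    exact ⟨g * τ1, G.mul_mem hg hτ1, by rw [Perm.mul_apply, h1, hgτ]⟩

/-- If two triples with nonzero `a, c, a', c'` and `a^2 + c^2 ≠ 0` have the same dihedral
invariants `s2 = ac`, `s3 = (a^2+c^2)b`, `s4 = a^4+c^4`, then they are conjugate under the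
dihedral group generated by `τ1` and `τ2`. -/
theorem same_invariants_implies_conjugate (k : Type*) [Field k] [IsAlgClosed k] [CharZero k]
    (ζ : k) (hζ : IsPrimitiveRoot ζ 8)
    (τ1 τ2 : Equiv.Perm (k × k × k))
    (h1 : ∀ p : k × k × k, τ1 p = (ζ ^ 6 * p.1, ζ ^ 4 * p.2.1, ζ ^ 2 * p.2.2))
    (h2 : ∀ p : k × k × k, τ2 p = (p.2.2, p.2.1, p.1))
    (a b c a' b' c' : k)
    (ha : a ≠ 0) (hc : c ≠ 0) (ha' : a' ≠ 0) (hc' : c' ≠ 0)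
    (hac : a ^ 2 + c ^ 2 ≠ 0)
    (hs2 : a * c = a' * c')
    (hs3 : (a ^ 2 + c ^ 2) * b = (a' ^ 2 + c' ^ 2) * b')
    (hs4 : a ^ 4 + c ^ 4 = a' ^ 4 + c' ^ 4) :
    ∃ g ∈ (Subgroup.closure {τ1, τ2} : Subgroup (Equiv.Perm (k × k × k))),
      g (a, b, c) = (a', b', c') :=
  same_invariants_implies_conjugate_general k ζ hζ τ1 τ2 h1 h2 a b c a' b' c' ha' hac hs2 hs3 hs4
end

section
/- In the D12 case, the dihedral invariants s2, s3, s4 expressed in terms of λ (with s2 = (5-9λ)(5λ-9)/λ, s3 = (3(λ+1)/λ)((5-9λ)^2 + (5λ-9)^2/λ), s4 = (5-9λ)^4/λ + (5λ-9)^4/λ^3) satisfy the polynomial relation s3 = (1/75)(9 s2 - 224)(s2 - 196). -/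
theorem s3_s2_relation_D12_general (k : Type*) [Field k] (lam s2 s3 : k)
    (hlam : lam ≠ 0)
    (hs2 : s2 = (5 - 9 * lam) * (5 * lam - 9) / lam)
    (hs3 : s3 = (3 * (lam + 1) / lam) * ((5 - 9 * lam) ^ 2 + (5 * lam - 9) ^ 2 / lam)) :
    75 * lam ^ 2 * s3 = lam ^ 2 * ((9 * s2 - 224) * (s2 - 196)) := by
  subst hs2 hs3
  field_simp
  ring

/-- In the `D12` case, the invariants `s2 = (5-9λ)(5λ-9)/λ` and
`s3 = (3(λ+1)/λ)((5-9λ)^2 + (5λ-9)^2/λ)` satisfy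
`75·λ^2·s3 = λ^2·(9 s2 - 224)(s2 - 196)`. -/
theorem s3_s2_relation_D12 (k : Type*) [Field k] [CharZero k] (lam s2 s3 : k)
    (hlam : lam ≠ 0)
    (hs2 : s2 = (5 - 9 * lam) * (5 * lam - 9) / lam)
    (hs3 : s3 = (3 * (lam + 1) / lam) * ((5 - 9 * lam) ^ 2 + (5 * lam - 9) ^ 2 / lam)) :
    75 * lam ^ 2 * s3 = lam ^ 2 * ((9 * s2 - 224) * (s2 - 196)) :=
  s3_s2_relation_D12_general k lam s2 s3 hlam hs2 hs3
end

section
/- In the D12 case, the invariants satisfy s4 = -(9/125) s2^3 + (1962/125) s2^2 - (840448/1125) s2 + 9834496/1125, where s2 and s4 are the rational functions of λ given by s2 = (5-9λ)(5λ-9)/λ and s4 = (5-9λ)^4/λ + (5λ-9)^4/λ^3. -/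
theorem s4_s2_relation_D12_general (k : Type*) [Field k] (lam s2 s4 : k)
    (hlam : lam ≠ 0)
    (hs2 : s2 = (5 - 9 * lam) * (5 * lam - 9) / lam)
    (hs4 : s4 = (5 - 9 * lam) ^ 4 / lam + (5 * lam - 9) ^ 4 / lam ^ 3) :
    1125 * s4 = -81 * s2 ^ 3 + 17658 * s2 ^ 2 - 840448 * s2 + 9834496 := by
  subst hs2 hs4
  field_simp
  ring

/-- In the `D12` case, with `s2 = (5-9λ)(5λ-9)/λ` and
`s4 = (5-9λ)^4/λ + (5λ-9)^4/λ^3`, one has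
`1125·s4 = -81·s2^3 + 17658·s2^2 - 840448·s2 + 9834496`. -/
theorem s4_s2_relation_D12 (k : Type*) [Field k] [CharZero k] (lam s2 s4 : k)
    (hlam : lam ≠ 0)
    (hs2 : s2 = (5 - 9 * lam) * (5 * lam - 9) / lam)
    (hs4 : s4 = (5 - 9 * lam) ^ 4 / lam + (5 * lam - 9) ^ 4 / lam ^ 3) :
    1125 * s4 = -81 * s2 ^ 3 + 17658 * s2 ^ 2 - 840448 * s2 + 9834496 :=
  s4_s2_relation_D12_general k lam s2 s4 hlam hs2 hs4
end
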